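/- Let X be a Feller process on E with generator A and domain D_A, having the FOED property with function F, infinite lifetime, and initial law with full support. Then for every f ∈ D_A and t ≥ 0: E[f(X_t)] = E[ f(X_0) + A f(X_0) · ∫₀ᵗ exp(∫₀ˢ F(u, X_0) du) ds ]. -/

import Mathlib

/-!
Dynkin's formula writes `E f(X_t)` as `E f(X_0) + ∫₀ᵗ E Af(X_s) ds`, and FOED rewrites each
`E Af(X_s)` as `E[Af(X_0) w_s]` with the weight `w_s = exp ∫₀ˢ F(u, X_0) du`. Applied to `f = 1`,
FOED says every `w_s` has mean one, so `Af(X_0) w_s` is integrable on `[0, t] × Ω`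
since `Af` is bounded, and Fubini moves the `s`-integral inside the expectation.
-/

open MeasureTheory Set Function Filter

theorem measurable_setIntegral_Ioc {α : Type*} [MeasurableSpace α] {G : α → ℝ → ℝ}
    (hG : Measurable (uncurry G)) {l r : α → ℝ} (hl : Measurable l) (hr : Measurable r) :
    Measurable fun x => ∫ u in Ioc (l x) (r x), G x u := by
  have hset : MeasurableSet {q : α × ℝ | q.2 ∈ Ioc (l q.1) (r q.1)} :=
    (measurableSet_lt (hl.comp measurable_fst) measurable_snd).inter
      (measurableSet_le measurable_snd (hr.comp measurable_fst))
  have hind : StronglyMeasurable fun q : α × ℝ => (Ioc (l q.1) (r q.1)).indicator (G q.1) q.2 :=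
    (Measurable.ite hset hG measurable_const).stronglyMeasurable
  convert (hind.integral_prod_right' (ν := volume)).measurable using 2 with x
  exact (integral_indicator measurableSet_Ioc).symm

theorem measurable_intervalIntegral {α : Type*} [MeasurableSpace α] {G : α → ℝ → ℝ}
    (hG : Measurable (uncurry G)) {l r : α → ℝ} (hl : Measurable l) (hr : Measurable r) :
    Measurable fun x => ∫ u in l x..r x, G x u :=
  (measurable_setIntegral_Ioc hG hl hr).sub (measurable_setIntegral_Ioc hG hr hl)

theorem integrable_prod_mul_of_integral_eq_one {α Ω : Type*} [MeasurableSpace α]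
    [MeasurableSpace Ω] {μ : Measure α} [IsFiniteMeasure μ] {P : Measure Ω} [SFinite P]
    {h : Ω → ℝ} {w : α → Ω → ℝ} {C : ℝ} (hh : Measurable h) (hC : ∀ ω, ‖h ω‖ ≤ C)
    (hw : Measurable (uncurry w)) (hw0 : ∀ s ω, 0 ≤ w s ω)
    (hw1 : ∀ᵐ s ∂μ, ∫ ω, w s ω ∂P = 1) :
    Integrable (fun p : α × Ω => h p.2 * w p.1 p.2) (μ.prod P) := by
  have hmeas : AEStronglyMeasurable (fun p : α × Ω => h p.2 * w p.1 p.2) (μ.prod P) :=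
    ((hh.comp measurable_snd).mul hw).aestronglyMeasurable
  have hwi : ∀ᵐ s ∂μ, Integrable (w s) P := by
    filter_upwards [hw1] with s hs using .of_integral_ne_zero (by simp [hs])
  refine (integrable_prod_iff hmeas).2 ⟨?_, ?_⟩
  · filter_upwards [hwi] with s hs
    exact hs.bdd_mul hh.aestronglyMeasurable (Eventually.of_forall hC)
  · refine Integrable.mono' (integrable_const C) hmeas.norm.integral_prod_right' ?_
    filter_upwards [hwi, hw1] with s hs hs1
    rw [Real.norm_eq_abs, abs_of_nonneg (integral_nonneg fun ω => norm_nonneg _)]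
    calc ∫ ω, ‖h ω * w s ω‖ ∂P ≤ ∫ ω, C * w s ω ∂P := by
          refine integral_mono (hs.bdd_mul hh.aestronglyMeasurable (Eventually.of_forall hC)).norm
            (hs.const_mul C) fun ω => ?_
          rw [norm_mul, Real.norm_of_nonneg (hw0 s ω)]
          exact mul_le_mul_of_nonneg_right (hC ω) (hw0 s ω)
      _ = C := by rw [integral_const_mul, hs1, mul_one]

section IntervalFubini

variable {Ω : Type*} [MeasurableSpace Ω] {P : Measure Ω} [SFinite P] {h : Ω → ℝ}
  {w : ℝ → Ω → ℝ} {C a b : ℝ}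

theorem integrable_prod_restrict_Ioc_mul (hh : Measurable h) (hC : ∀ ω, ‖h ω‖ ≤ C)
    (hw : Measurable (uncurry w)) (hw0 : ∀ s ω, 0 ≤ w s ω)
    (hw1 : ∀ s ∈ Ioc a b, ∫ ω, w s ω ∂P = 1) :
    Integrable (uncurry fun s ω => h ω * w s ω) ((volume.restrict (Ioc a b)).prod P) :=
  integrable_prod_mul_of_integral_eq_one hh hC hw hw0 <|
    (ae_restrict_iff' measurableSet_Ioc).2 (Eventually.of_forall hw1)

theorem integrable_mul_intervalIntegral (hab : a ≤ b) (hh : Measurable h)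
    (hC : ∀ ω, ‖h ω‖ ≤ C) (hw : Measurable (uncurry w)) (hw0 : ∀ s ω, 0 ≤ w s ω)
    (hw1 : ∀ s ∈ Ioc a b, ∫ ω, w s ω ∂P = 1) :
    Integrable (fun ω => h ω * ∫ s in a..b, w s ω) P := by
  simpa only [intervalIntegral.integral_of_le hab, uncurry_apply_pair, integral_const_mul] using
    (integrable_prod_restrict_Ioc_mul hh hC hw hw0 hw1).integral_prod_right

theorem intervalIntegral_integral_mul_comm (hab : a ≤ b) (hh : Measurable h)
    (hC : ∀ ω, ‖h ω‖ ≤ C) (hw : Measurable (uncurry w)) (hw0 : ∀ s ω, 0 ≤ w s ω)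
    (hw1 : ∀ s ∈ Ioc a b, ∫ ω, w s ω ∂P = 1) :
    ∫ s in a..b, ∫ ω, h ω * w s ω ∂P = ∫ ω, h ω * (∫ s in a..b, w s ω) ∂P := by
  simpa only [intervalIntegral.integral_of_le hab, uncurry_apply_pair, integral_const_mul] using
    integral_integral_swap (integrable_prod_restrict_Ioc_mul hh hC hw hw0 hw1)

end IntervalFubini

def HasFOED {Ω E : Type*} [MeasurableSpace Ω] [MeasurableSpace E] (P : Measure Ω)
    (X : ℝ → Ω → E) (F : ℝ → E → ℝ) : Prop :=
  ∀ f : E → ℝ, Measurable f → (∃ C, ∀ x, |f x| ≤ C) → ∀ t ≥ (0:ℝ),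
    ∫ ω, f (X t ω) ∂P = ∫ ω, f (X 0 ω) * Real.exp (∫ u in (0:ℝ)..t, F u (X 0 ω)) ∂P

namespace HasFOED

variable {Ω E : Type*} [MeasurableSpace Ω] [MeasurableSpace E] {P : Measure Ω}
  [IsProbabilityMeasure P] {X : ℝ → Ω → E} {F : ℝ → E → ℝ}

theorem integral_exp_eq_one (hX : HasFOED P X F) {s : ℝ} (hs : 0 ≤ s) :
    ∫ ω, Real.exp (∫ u in (0:ℝ)..s, F u (X 0 ω)) ∂P = 1 := by
  simpa using (hX (fun _ => 1) measurable_const ⟨1, fun _ => le_of_eq abs_one⟩ s hs).symm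

theorem measurable_uncurry_exp (hX0 : Measurable (X 0)) (hF : Measurable (uncurry F)) :
    Measurable (uncurry fun s ω => Real.exp (∫ u in (0:ℝ)..s, F u (X 0 ω))) :=
  (measurable_intervalIntegral (G := fun p : ℝ × Ω => fun u => F u (X 0 p.2))
    (hF.comp (measurable_snd.prodMk ((hX0.comp measurable_snd).comp measurable_fst)))
    measurable_const measurable_fst).exp

variable {g : E → ℝ} {C t : ℝ}

theorem integrable_mul_intervalIntegral_exp (hX : HasFOED P X F) (hX0 : Measurable (X 0))
    (hF : Measurable (uncurry F)) (hg : Measurable g) (hC : ∀ x, |g x| ≤ C) (ht : 0 ≤ t) :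
    Integrable (fun ω => g (X 0 ω) *
      ∫ s in (0:ℝ)..t, Real.exp (∫ u in (0:ℝ)..s, F u (X 0 ω))) P :=
  integrable_mul_intervalIntegral ht (hg.comp hX0) (fun ω => hC (X 0 ω))
    (measurable_uncurry_exp hX0 hF) (fun _ _ => (Real.exp_pos _).le)
    fun _ hs => hX.integral_exp_eq_one hs.1.le

theorem intervalIntegral_integral_comp (hX : HasFOED P X F) (hX0 : Measurable (X 0))
    (hF : Measurable (uncurry F)) (hg : Measurable g) (hC : ∀ x, |g x| ≤ C) (ht : 0 ≤ t) :
    ∫ s in (0:ℝ)..t, ∫ ω, g (X s ω) ∂P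
      = ∫ ω, g (X 0 ω) * (∫ s in (0:ℝ)..t, Real.exp (∫ u in (0:ℝ)..s, F u (X 0 ω))) ∂P := by
  calc ∫ s in (0:ℝ)..t, ∫ ω, g (X s ω) ∂P
      = ∫ s in (0:ℝ)..t, ∫ ω, g (X 0 ω) * Real.exp (∫ u in (0:ℝ)..s, F u (X 0 ω)) ∂P :=
        intervalIntegral.integral_congr fun s hs => hX g hg ⟨C, hC⟩ s (uIcc_of_le ht ▸ hs).1
    _ = _ := intervalIntegral_integral_mul_comm ht (hg.comp hX0) (fun ω => hC (X 0 ω))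
        (measurable_uncurry_exp hX0 hF) (fun _ _ => (Real.exp_pos _).le)
        fun _ hs => hX.integral_exp_eq_one hs.1.le

end HasFOED

theorem stmt_17_general {Ω E : Type*} [MeasurableSpace Ω] [MeasurableSpace E]
    (P : Measure Ω) [IsProbabilityMeasure P]
    (X : ℝ → Ω → E) (hX : ∀ t, Measurable (X t))
    (F : ℝ → E → ℝ) (hF : Measurable (Function.uncurry F))
    (hFOED : ∀ f : E → ℝ, Measurable f → (∃ C, ∀ x, |f x| ≤ C) → ∀ t ≥ (0:ℝ),
      ∫ ω, f (X t ω) ∂P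
        = ∫ ω, f (X 0 ω) * Real.exp (∫ u in (0:ℝ)..t, F u (X 0 ω)) ∂P)
    (A : (E → ℝ) → (E → ℝ)) (f : E → ℝ)
    (hf : Measurable f) (hfb : ∃ C, ∀ x, |f x| ≤ C)
    (hAf : Measurable (A f)) (hAfb : ∃ C, ∀ x, |A f x| ≤ C)
    (hDynkin : ∀ t ≥ (0:ℝ),
      ∫ ω, f (X t ω) ∂P
        = ∫ ω, f (X 0 ω) ∂P + ∫ s in (0:ℝ)..t, ∫ ω, A f (X s ω) ∂P) :
    ∀ t ≥ (0:ℝ),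
      ∫ ω, f (X t ω) ∂P
        = ∫ ω, (f (X 0 ω)
            + A f (X 0 ω) *
              ∫ s in (0:ℝ)..t, Real.exp (∫ u in (0:ℝ)..s, F u (X 0 ω))) ∂P := by
  intro t ht
  have hX' : HasFOED P X F := hFOED
  obtain ⟨Cf, hCf⟩ := hfb
  obtain ⟨C, hC⟩ := hAfb
  have hfX : Integrable (fun ω => f (X 0 ω)) P :=
    .of_bound (hf.comp (hX 0)).aestronglyMeasurable Cf (Eventually.of_forall fun ω => hCf _)
  rw [hDynkin t ht, hX'.intervalIntegral_integral_comp (hX 0) hF hAf hC ht,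
    integral_add hfX (hX'.integrable_mul_intervalIntegral_exp (hX 0) hF hAf hC ht)]

/-- For a Feller process `X` with generator `A` and the FOED property, for `f` in the domain of
`A` (expressed via the Dynkin formula hypothesis and boundedness of `f` and `Af`):
`E[f(X_t)] = E[f(X_0) + A f(X_0) ∫₀ᵗ exp(∫₀ˢ F(u,X_0) du) ds]`. -/
theorem stmt_17 {Ω E : Type*} [MeasurableSpace Ω] [MeasurableSpace E]
    (P : Measure Ω) [IsProbabilityMeasure P]
    (X : ℝ → Ω → E) (hX : ∀ t, Measurable (X t))
    (F : ℝ → E → ℝ) (hF : Measurable (Function.uncurry F))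
    (hFloc : ∀ x : E, ∀ t ≥ (0:ℝ), IntervalIntegrable (fun u => F u x) volume 0 t)
    (hFOED : ∀ f : E → ℝ, Measurable f → (∃ C, ∀ x, |f x| ≤ C) → ∀ t ≥ (0:ℝ),
      ∫ ω, f (X t ω) ∂P
        = ∫ ω, f (X 0 ω) * Real.exp (∫ u in (0:ℝ)..t, F u (X 0 ω)) ∂P)
    (A : (E → ℝ) → (E → ℝ)) (f : E → ℝ)
    (hf : Measurable f) (hfb : ∃ C, ∀ x, |f x| ≤ C)
    (hAf : Measurable (A f)) (hAfb : ∃ C, ∀ x, |A f x| ≤ C)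
    (hDynkin : ∀ t ≥ (0:ℝ),
      ∫ ω, f (X t ω) ∂P
        = ∫ ω, f (X 0 ω) ∂P + ∫ s in (0:ℝ)..t, ∫ ω, A f (X s ω) ∂P) :
    ∀ t ≥ (0:ℝ),
      ∫ ω, f (X t ω) ∂P
        = ∫ ω, (f (X 0 ω)
            + A f (X 0 ω) *
              ∫ s in (0:ℝ)..t, Real.exp (∫ u in (0:ℝ)..s, F u (X 0 ω))) ∂P :=
  stmt_17_general P X hX F hF hFOED A f hf hfb hAf hAfb hDynkin
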